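/- arXiv:2208.14238 — 4 statements merged into one kernel-verified Lean document; each statement's English description precedes it below -/
import Mathlib

section
/- Let E ⊆ D be integral domains and let a be a nonzero element of E such that E[a⁻¹] = D[a⁻¹] (as subrings of the fraction field of D) and aD ∩ E = aE. Then E = D. -/
/-- Let `E ⊆ D` be integral domains and `a ∈ E` nonzero. If `E[a⁻¹] = D[a⁻¹]` inside the
fraction field of `D` and `aD ∩ E = aE`, then `E = D`. -/
theorem stmt0 {D : Type*} [CommRing D] [IsDomain D] (E : Subring D) (a : D)
    (haE : a ∈ E) (ha : a ≠ 0)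
    (hloc : Subring.closure
        ((algebraMap D (FractionRing D)) '' (E : Set D) ∪ {(algebraMap D (FractionRing D) a)⁻¹}) =
      Subring.closure
        (Set.range (algebraMap D (FractionRing D)) ∪ {(algebraMap D (FractionRing D) a)⁻¹}))
    (hcontr : ∀ x ∈ E, (∃ d : D, x = a * d) → ∃ e ∈ E, x = a * e) :
    E = ⊤ := by
  set K := FractionRing D
  set φ := algebraMap D K with hφ
  have hinj : Function.Injective φ := IsFractionRing.injective D K
  have hφa : φ a ≠ 0 := fun h => ha (hinj (h.trans (map_zero φ).symm))
  -- every element of the closure has the form φ e / (φ a)^n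
  have key : ∀ x ∈ Subring.closure ((φ : D → K) '' (E : Set D) ∪ {(φ a)⁻¹}),
      ∃ n : ℕ, ∃ e ∈ E, x * (φ a) ^ n = φ e := by
    intro x hx
    induction hx using Subring.closure_induction with
    | mem y hy =>
      rcases hy with ⟨e, he, rfl⟩ | hy
      · exact ⟨0, e, he, by simp⟩
      · refine ⟨1, 1, one_mem E, ?_⟩
        simp only [Set.mem_singleton_iff] at hy
        subst hy
        simp [inv_mul_cancel₀ hφa]
    | one => exact ⟨0, 1, one_mem E, by simp⟩
    | zero => exact ⟨0, 0, zero_mem E, by simp⟩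
    | add x y hx hy ihx ihy =>
      obtain ⟨n, e, he, hen⟩ := ihx
      obtain ⟨m, f, hf, hfm⟩ := ihy
      refine ⟨n + m, e * a ^ m + f * a ^ n, add_mem (mul_mem he (pow_mem haE m))
        (mul_mem hf (pow_mem haE n)), ?_⟩
      push_cast [map_add, map_mul, map_pow]
      rw [← hen, ← hfm]; ring
    | neg x hx ihx =>
      obtain ⟨n, e, he, hen⟩ := ihx
      exact ⟨n, -e, neg_mem he, by rw [map_neg, ← hen]; ring⟩
    | mul x y hx hy ihx ihy =>
      obtain ⟨n, e, he, hen⟩ := ihx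
      obtain ⟨m, f, hf, hfm⟩ := ihy
      refine ⟨n + m, e * f, mul_mem he hf, ?_⟩
      rw [map_mul, ← hen, ← hfm]; ring
  -- auxiliary: if a^n * d ∈ E then d ∈ E
  have aux : ∀ n : ℕ, ∀ d : D, a ^ n * d ∈ E → d ∈ E := by
    intro n
    induction n with
    | zero => intro d hd; simpa using hd
    | succ n ih =>
      intro d hd
      obtain ⟨e, he, heq⟩ := hcontr (a ^ (n + 1) * d) hd ⟨a ^ n * d, by ring⟩
      have : a ^ n * d = e := by
        have : a * (a ^ n * d) = a * e := by rw [← heq]; ring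
        exact mul_left_cancel₀ ha this
      exact ih d (this ▸ he)
  rw [eq_top_iff]
  intro d _
  have hd : φ d ∈ Subring.closure ((φ : D → K) '' (E : Set D) ∪ {(φ a)⁻¹}) := by
    rw [hloc]
    exact Subring.subset_closure (Or.inl ⟨d, rfl⟩)
  obtain ⟨n, e, he, hen⟩ := key _ hd
  have : a ^ n * d = e := by
    apply hinj
    rw [map_mul, map_pow, ← hen]; ring
  exact aux n d (this ▸ he)
end

section
/- Let B be an integral domain containing a field k and φ an exponential map on B. Then the ring of invariants B^φ is algebraically closed in B: any element of B that is algebraic over B^φ lies in B^φ. -/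
open Polynomial

/-- An exponential map on a `k`-algebra `B`: a `k`-algebra homomorphism
`φ : B → B[U]` with `ε₀ ∘ φ = id` and the coaction condition `φ_V φ_U = φ_{U+V}`. -/
structure ExpMap (k B : Type*) [CommRing k] [CommRing B] [Algebra k B] where
  toAlgHom : B →ₐ[k] Polynomial B
  eval_zero : ∀ b, (toAlgHom b).eval 0 = b
  coaction : ∀ b, (toAlgHom b).map toAlgHom.toRingHom =
    (toAlgHom b).eval₂ (Polynomial.C.comp Polynomial.C)
      (Polynomial.X + Polynomial.C Polynomial.X)

namespace ExpMap

variable {k B : Type*} [CommRing k] [CommRing B] [Algebra k B]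

/-- The ring of invariants `B^φ = {b ∈ B : φ(b) = b}` of an exponential map. -/
noncomputable def fixed (φ : ExpMap k B) : Subalgebra k B :=
  AlgHom.equalizer φ.toAlgHom Polynomial.CAlgHom

/-- An exponential map is nontrivial if `B^φ ≠ B`. -/
def IsNontrivial (φ : ExpMap k B) : Prop := φ.fixed ≠ ⊤

end ExpMap

/-- The Makar-Limanov invariant: the intersection of the rings of invariants of all
exponential maps on `B`. -/
noncomputable def ML (k B : Type*) [CommRing k] [CommRing B] [Algebra k B] : Subalgebra k B :=
  ⨅ φ : ExpMap k B, φ.fixed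

/-- The Derksen invariant: the `k`-subalgebra of `B` generated by the rings of invariants
of all nontrivial exponential maps on `B`. -/
noncomputable def DK (k B : Type*) [CommRing k] [CommRing B] [Algebra k B] : Subalgebra k B :=
  Algebra.adjoin k (⋃ φ ∈ {φ : ExpMap k B | φ.IsNontrivial}, (φ.fixed : Set B))

/-- The ring of invariants of an exponential map on a domain is algebraically closed in `B`:
any `b ∈ B` which is a root of a nonzero polynomial with coefficients in `B^φ` lies in `B^φ`. -/
theorem stmt2 {k B : Type*} [Field k] [CommRing B] [IsDomain B] [Algebra k B]
    (φ : ExpMap k B) (b : B) (p : Polynomial B) (hp : p ≠ 0)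
    (hcoeff : ∀ i, p.coeff i ∈ φ.fixed) (hroot : p.eval b = 0) :
    b ∈ φ.fixed := by
  set f := φ.toAlgHom.toRingHom with hf
  have hfC : ∀ i, f (p.coeff i) = C (p.coeff i) := fun i => hcoeff i
  have h1 : p.eval₂ f (f b) = 0 := by
    rw [← map_zero f, ← hroot]
    have := Polynomial.hom_eval₂ p (RingHom.id B) f b
    rw [RingHom.comp_id] at this
    exact this.symm
  have h2 : p.comp (f b) = 0 := by
    rw [Polynomial.comp, ← h1]
    rw [Polynomial.eval₂_eq_sum_range, Polynomial.eval₂_eq_sum_range]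
    exact Finset.sum_congr rfl fun i _ => by rw [hfC]
  rcases (Polynomial.comp_eq_zero_iff).1 h2 with h | ⟨_, h⟩
  · exact absurd h hp
  · have hb : (f b).coeff 0 = b := by
      rw [Polynomial.coeff_zero_eq_eval_zero]
      exact φ.eval_zero b
    show φ.toAlgHom b = Polynomial.CAlgHom b
    have : φ.toAlgHom b = C b := by rw [hb] at h; exact h
    simpa [Polynomial.CAlgHom] using this
end

section
/- Let B be an affine domain over a field k and φ a nontrivial exponential map on B. Let x ∈ B \ B^φ be an element such that the U-degree of φ(x) ∈ B[U] is minimal positive, and let c ∈ B be the leading coefficient of φ(x) in U. Then c ∈ B^φ and B[c⁻¹] = B^φ[c⁻¹][x], which is a polynomial ring in one variable x over B^φ[c⁻¹]. -/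
open Polynomial

namespace StmtAux

section Basic

variable {k B : Type*} [CommRing k] [CommRing B] [Algebra k B] (φ : ExpMap k B)

theorem mem_fixed_iff (b : B) : b ∈ φ.fixed ↔ φ.toAlgHom b = Polynomial.C b :=
  AlgHom.mem_equalizer _ _ _

theorem expmap_eq_zero_iff (b : B) : φ.toAlgHom b = 0 ↔ b = 0 := by
  constructor
  · intro h
    have := φ.eval_zero b
    rw [h, eval_zero] at this
    exact this.symm
  · rintro rfl; exact map_zero _

theorem mem_fixed_of_natDegree_eq_zero (b : B) (h : (φ.toAlgHom b).natDegree = 0) :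
    b ∈ φ.fixed := by
  obtain ⟨a, ha⟩ := natDegree_eq_zero.mp h
  have hb := φ.eval_zero b
  rw [← ha, eval_C] at hb
  rw [mem_fixed_iff, ← ha, hb]

theorem master (b : B) (i : ℕ) :
    φ.toAlgHom ((φ.toAlgHom b).coeff i) =
      ∑ e ∈ (φ.toAlgHom b).support,
        Polynomial.C ((φ.toAlgHom b).coeff e) * Polynomial.X ^ (e - i) *
          ((e.choose i : ℕ) : Polynomial B) := by
  have h := congrArg (fun p => Polynomial.coeff p i) (φ.coaction b)
  simp only [coeff_map] at h
  rw [eval₂_eq_sum, Polynomial.sum_def, finset_sum_coeff] at h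
  have hcg : ∀ e ∈ (φ.toAlgHom b).support,
      ((Polynomial.C.comp Polynomial.C) ((φ.toAlgHom b).coeff e) *
        (Polynomial.X + Polynomial.C Polynomial.X) ^ e).coeff i =
      Polynomial.C ((φ.toAlgHom b).coeff e) * Polynomial.X ^ (e - i) *
        ((e.choose i : ℕ) : Polynomial B) := by
    intro e _
    rw [RingHom.comp_apply, coeff_C_mul, coeff_X_add_C_pow]
    ring
  rw [Finset.sum_congr rfl hcg] at h
  exact h

theorem lead_fixed (b : B) : (φ.toAlgHom b).leadingCoeff ∈ φ.fixed := by
  by_cases h0 : φ.toAlgHom b = 0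
  · rw [h0, leadingCoeff_zero]; exact zero_mem _
  · rw [mem_fixed_iff, Polynomial.leadingCoeff, master φ b (φ.toAlgHom b).natDegree,
      Finset.sum_eq_single_of_mem _ (natDegree_mem_support_of_nonzero h0)]
    · simp
    · intro e he hne
      have hlt : e < (φ.toAlgHom b).natDegree :=
        lt_of_le_of_ne (le_natDegree_of_mem_supp e he) hne
      rw [Nat.choose_eq_zero_of_lt hlt]
      simp

theorem deg_coeff_le (b : B) (i : ℕ) :
    (φ.toAlgHom ((φ.toAlgHom b).coeff i)).natDegree ≤ (φ.toAlgHom b).natDegree - i := by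
  rw [master φ b i]
  apply natDegree_sum_le_of_forall_le
  intro e he
  apply le_trans natDegree_mul_le
  have h1 : (Polynomial.C ((φ.toAlgHom b).coeff e) * Polynomial.X ^ (e - i)).natDegree
      ≤ e - i := by
    apply le_trans natDegree_mul_le
    simpa using natDegree_X_pow_le (R := B) (e - i)
  have h2 : (((e.choose i : ℕ) : Polynomial B)).natDegree = 0 := natDegree_natCast _
  have h3 : e ≤ (φ.toAlgHom b).natDegree := le_natDegree_of_mem_supp e he
  omega

theorem coeff_master {B : Type*} [CommRing B] {k : Type*} [CommRing k] [Algebra k B]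
    (φ : ExpMap k B) (b : B) (i : ℕ) (hi : i < (φ.toAlgHom b).natDegree) :
    (φ.toAlgHom ((φ.toAlgHom b).coeff i)).coeff ((φ.toAlgHom b).natDegree - i) =
      (φ.toAlgHom b).leadingCoeff * (((φ.toAlgHom b).natDegree.choose i : ℕ) : B) := by
  have h0 : φ.toAlgHom b ≠ 0 := fun h => by simp [h] at hi
  have hcast : ∀ nn : ℕ, ((nn : ℕ) : Polynomial B) = Polynomial.C ((nn : ℕ) : B) := fun nn => by
    simp
  rw [master φ b i, finset_sum_coeff,
    Finset.sum_eq_single_of_mem (φ.toAlgHom b).natDegree (natDegree_mem_support_of_nonzero h0)]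
  · rw [hcast, mul_right_comm, ← Polynomial.C_mul, coeff_C_mul, coeff_X_pow, if_pos rfl]
    rw [mul_one, Polynomial.leadingCoeff]
  · intro e he hne
    rw [hcast, mul_right_comm, ← Polynomial.C_mul, coeff_C_mul, coeff_X_pow]
    have he' : e ≤ (φ.toAlgHom b).natDegree := le_natDegree_of_mem_supp e he
    by_cases hei : i ≤ e
    · rw [if_neg (by omega), mul_zero]
    · have hz : e.choose i = 0 := Nat.choose_eq_zero_of_lt (by omega)
      simp [hz]

end Basic

section Domain

variable {k B : Type*} [CommRing k] [CommRing B] [IsDomain B] [Algebra k B] (φ : ExpMap k B)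
variable (x : B) (hx : x ∉ φ.fixed) (hpos : 0 < (φ.toAlgHom x).natDegree)
variable (hmin : ∀ y : B, y ∉ φ.fixed → (φ.toAlgHom x).natDegree ≤ (φ.toAlgHom y).natDegree)

include hx hpos hmin in
theorem choose_cast_zero (b : B) (hb : b ∉ φ.fixed) (i : ℕ)
    (h1 : (φ.toAlgHom b).natDegree - (φ.toAlgHom x).natDegree < i)
    (h2 : i < (φ.toAlgHom b).natDegree) :
    (((φ.toAlgHom b).natDegree.choose i : ℕ) : B) = 0 := by
  have hb0 : b ≠ 0 := fun h => hb (h ▸ zero_mem _)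
  have hφb : φ.toAlgHom b ≠ 0 := fun h => hb0 ((expmap_eq_zero_iff φ b).mp h)
  have hai : (φ.toAlgHom b).coeff i ∈ φ.fixed := by
    by_contra hna
    have ha1 := hmin _ hna
    have ha2 := deg_coeff_le φ b i
    omega
  have hC : φ.toAlgHom ((φ.toAlgHom b).coeff i) = Polynomial.C ((φ.toAlgHom b).coeff i) :=
    (mem_fixed_iff φ _).mp hai
  have hcm := coeff_master φ b i h2
  rw [hC, Polynomial.coeff_C, if_neg (by omega)] at hcm
  have hl : (φ.toAlgHom b).leadingCoeff ≠ 0 := leadingCoeff_ne_zero.mpr hφb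
  rcases mul_eq_zero.mp hcm.symm with h | h
  · exact absurd h hl
  · exact h

include hx hpos hmin in
theorem deg_dvd (b : B) (hb : b ∉ φ.fixed) :
    (φ.toAlgHom x).natDegree ∣ (φ.toAlgHom b).natDegree := by
  set n := (φ.toAlgHom x).natDegree with hn
  set m := (φ.toAlgHom b).natDegree with hm
  have hnm : n ≤ m := hmin b hb
  have hxz : ∀ j, 0 < j → j < n → ((n.choose j : ℕ) : B) = 0 := fun j hj1 hj2 =>
    choose_cast_zero φ x hx hpos hmin x hx j (by omega) hj2
  rcases Nat.eq_zero_or_pos (m % n) with hr | hr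
  · exact Nat.dvd_of_mod_eq_zero hr
  exfalso
  set r := m % n with hrdef
  have hrn : r < n := Nat.mod_lt _ hpos
  have h0 : ((m.choose r : ℕ) : B) = 0 := by
    have hcz := choose_cast_zero φ x hx hpos hmin b hb (m - r) (by omega) (by omega)
    rwa [Nat.choose_symm (by omega)] at hcz
  have h1 : ∀ s : ℕ, (((n * s + r).choose r : ℕ) : B) = 1 := by
    intro s
    induction s with
    | zero => simp
    | succ s ih =>
      have hstep : n * (s + 1) + r = n + (n * s + r) := by ring
      rw [hstep, Nat.add_choose_eq]
      push_cast
      rw [Finset.sum_eq_single (0, r)]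
      · simpa using ih
      · rintro ⟨u, v⟩ huv hne
        have huv' : u + v = r := Finset.HasAntidiagonal.mem_antidiagonal.mp huv
        have hu : 0 < u := by
          rcases Nat.eq_zero_or_pos u with h | h
          · exfalso; apply hne; subst h; simp at huv' ⊢; omega
          · exact h
        rw [hxz u hu (by omega)]
        ring
      · intro hmem
        exact absurd (Finset.HasAntidiagonal.mem_antidiagonal.mpr (by omega)) hmem
  have h2 := h1 (m / n)
  have hmn : n * (m / n) + r = m := Nat.div_add_mod m n
  rw [hmn, h0] at h2
  exact zero_ne_one h2

include hpos in
theorem no_poly_rel (c : B) (hc : c = (φ.toAlgHom x).leadingCoeff)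
    (b : ℕ → B) (hbf : ∀ i, b i ∈ φ.fixed) (N : ℕ) (hbN : b N ≠ 0)
    (hsum : ∑ i ∈ Finset.range (N + 1), b i * x ^ i = 0) : False := by
  have hφx : φ.toAlgHom x ≠ 0 := fun h => by simp [h] at hpos
  have hcne : c ≠ 0 := hc ▸ leadingCoeff_ne_zero.mpr hφx
  have h := congrArg φ.toAlgHom hsum
  rw [map_sum, map_zero] at h
  have h' : ∀ i ∈ Finset.range (N + 1),
      φ.toAlgHom (b i * x ^ i) = Polynomial.C (b i) * (φ.toAlgHom x) ^ i := by
    intro i _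
    rw [map_mul, map_pow, (mem_fixed_iff φ (b i)).mp (hbf i)]
  rw [Finset.sum_congr rfl h'] at h
  have h2 := congrArg (fun p => Polynomial.coeff p (N * (φ.toAlgHom x).natDegree)) h
  simp only [finset_sum_coeff, coeff_zero] at h2
  rw [Finset.sum_eq_single_of_mem N (Finset.self_mem_range_succ N)] at h2
  · rw [coeff_C_mul] at h2
    have hdeg : ((φ.toAlgHom x) ^ N).natDegree = N * (φ.toAlgHom x).natDegree := by
      rw [natDegree_pow]
    have hco : ((φ.toAlgHom x) ^ N).coeff (N * (φ.toAlgHom x).natDegree) = c ^ N := by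
      rw [← hdeg, Polynomial.coeff_natDegree, leadingCoeff_pow, ← hc]
    rw [hco] at h2
    rcases mul_eq_zero.mp h2 with h3 | h3
    · exact hbN h3
    · exact pow_ne_zero N hcne h3
  · intro i hi hne
    apply coeff_eq_zero_of_natDegree_lt
    have hiN : i < N := by
      have := Finset.mem_range.mp hi; omega
    have hA : (Polynomial.C (b i) * (φ.toAlgHom x) ^ i).natDegree
        ≤ i * (φ.toAlgHom x).natDegree := by
      apply natDegree_mul_le.trans
      rw [natDegree_C, natDegree_pow]
      omega
    have hB : i * (φ.toAlgHom x).natDegree < N * (φ.toAlgHom x).natDegree :=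
      Nat.mul_lt_mul_of_lt_of_le hiN (le_refl _) hpos
    omega

end Domain

end StmtAux

/-- Local slice theorem. -/
theorem stmt3 {k B : Type*} [Field k] [CommRing B] [IsDomain B] [Algebra k B]
    [Algebra.FiniteType k B]
    (K : Type*) [Field K] [Algebra B K] [IsFractionRing B K]
    [Algebra k K] [IsScalarTower k B K]
    (φ : ExpMap k B) (hφ : φ.IsNontrivial)
    (x : B) (hx : x ∉ φ.fixed)
    (hpos : 0 < (φ.toAlgHom x).natDegree)
    (hmin : ∀ y : B, y ∉ φ.fixed → (φ.toAlgHom x).natDegree ≤ (φ.toAlgHom y).natDegree)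
    (c : B) (hc : c = (φ.toAlgHom x).leadingCoeff) :
    c ∈ φ.fixed ∧
    Algebra.adjoin k (Set.range (algebraMap B K) ∪ {(algebraMap B K c)⁻¹}) =
      Algebra.adjoin k
        ((algebraMap B K) '' (φ.fixed : Set B) ∪ {(algebraMap B K c)⁻¹, algebraMap B K x}) ∧
    Transcendental
      ↥(Algebra.adjoin k ((algebraMap B K) '' (φ.fixed : Set B) ∪ {(algebraMap B K c)⁻¹}))
      (algebraMap B K x) := by
  classical
  have hφx : φ.toAlgHom x ≠ 0 := fun h => by simp [h] at hpos
  have hcne : c ≠ 0 := hc ▸ leadingCoeff_ne_zero.mpr hφx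
  have hinj : Function.Injective (algebraMap B K) := IsFractionRing.injective B K
  have hfc : algebraMap B K c ≠ 0 := fun h => hcne (hinj (by rw [h, map_zero]))
  have hcfix : c ∈ φ.fixed := hc ▸ StmtAux.lead_fixed φ x
  set f := algebraMap B K with hf
  refine ⟨hcfix, ?_, ?_⟩
  · set S₂ := Algebra.adjoin k (f '' (φ.fixed : Set B) ∪ {(f c)⁻¹, f x}) with hS₂
    have hgen_cinv : (f c)⁻¹ ∈ S₂ := Algebra.subset_adjoin (Or.inr (Set.mem_insert _ _))
    have hgen_x : f x ∈ S₂ :=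
      Algebra.subset_adjoin (Or.inr (Set.mem_insert_iff.mpr (Or.inr rfl)))
    have hgen_fix : ∀ a ∈ φ.fixed, f a ∈ S₂ := fun a ha =>
      Algebra.subset_adjoin (Or.inl ⟨a, ha, rfl⟩)
    have hdesc : ∀ (m : ℕ) (b : B), (φ.toAlgHom b).natDegree < m → f b ∈ S₂ := by
      intro m
      induction m with
      | zero => exact fun b h => absurd h (Nat.not_lt_zero _)
      | succ m ih =>
        intro b hbm
        by_cases hbf : b ∈ φ.fixed
        · exact hgen_fix b hbf
        · have hmb : 0 < (φ.toAlgHom b).natDegree :=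
            Nat.pos_of_ne_zero fun h => hbf (StmtAux.mem_fixed_of_natDegree_eq_zero φ b h)
          obtain ⟨q, hq⟩ := StmtAux.deg_dvd φ x hx hpos hmin b hbf
          have haf : (φ.toAlgHom b).leadingCoeff ∈ φ.fixed := StmtAux.lead_fixed φ b
          set a := (φ.toAlgHom b).leadingCoeff with ha
          set b1 := c ^ q * b - a * x ^ q with hb1
          have hφc : φ.toAlgHom c = Polynomial.C c := (StmtAux.mem_fixed_iff φ c).mp hcfix
          have hφa : φ.toAlgHom a = Polynomial.C a := (StmtAux.mem_fixed_iff φ a).mp haf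
          have hφb1 : φ.toAlgHom b1 =
              Polynomial.C (c ^ q) * φ.toAlgHom b - Polynomial.C a * (φ.toAlgHom x) ^ q := by
            rw [hb1, map_sub, map_mul, map_mul, map_pow, map_pow, hφc, hφa, ← Polynomial.C_pow]
          have hδ : (φ.toAlgHom b1).natDegree < (φ.toAlgHom b).natDegree := by
            have hle : (φ.toAlgHom b1).natDegree ≤ (φ.toAlgHom b).natDegree := by
              rw [hφb1]
              apply le_trans (natDegree_sub_le _ _)
              apply max_le
              · exact natDegree_mul_le.trans (by simp)
              · apply natDegree_mul_le.trans
                rw [natDegree_C, natDegree_pow, zero_add, ← mul_comm]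
                exact hq.ge
            have hcoe : (φ.toAlgHom b1).coeff (φ.toAlgHom b).natDegree = 0 := by
              rw [hφb1, coeff_sub, coeff_C_mul, coeff_C_mul]
              have e2 : ((φ.toAlgHom x) ^ q).coeff ((φ.toAlgHom b).natDegree) = c ^ q := by
                have hd : ((φ.toAlgHom x) ^ q).natDegree = (φ.toAlgHom b).natDegree := by
                  rw [natDegree_pow, hq, mul_comm]
                rw [← hd, Polynomial.coeff_natDegree, leadingCoeff_pow, ← hc]
              rw [e2, Polynomial.coeff_natDegree, ← ha]
              ring
            rcases lt_or_eq_of_le hle with h | h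
            · exact h
            · exfalso
              have hlc : (φ.toAlgHom b1).leadingCoeff = 0 := by
                rw [Polynomial.leadingCoeff, h, hcoe]
              have hz : φ.toAlgHom b1 = 0 := leadingCoeff_eq_zero.mp hlc
              rw [hz, natDegree_zero] at h
              omega
          have hmem1 : f b1 ∈ S₂ := ih b1 (by omega)
          have hident : f b = (f b1 + f a * (f x) ^ q) * ((f c)⁻¹) ^ q := by
            have hBid : c ^ q * b = b1 + a * x ^ q := by rw [hb1]; ring
            have hKid : (f c) ^ q * f b = f b1 + f a * (f x) ^ q := by
              rw [← map_pow, ← map_mul, hBid, map_add, map_mul, map_pow]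
            rw [← hKid, inv_pow, mul_comm ((f c) ^ q) (f b), mul_assoc,
              mul_inv_cancel₀ (pow_ne_zero q hfc), mul_one]
          rw [hident]
          exact mul_mem (add_mem hmem1 (mul_mem (hgen_fix a haf) (pow_mem hgen_x q)))
            (pow_mem hgen_cinv q)
    apply le_antisymm
    · apply Algebra.adjoin_le
      rintro z (⟨b, rfl⟩ | hz)
      · exact hdesc ((φ.toAlgHom b).natDegree + 1) b (Nat.lt_succ_self _)
      · rw [Set.mem_singleton_iff.mp hz]; exact hgen_cinv
    · apply Algebra.adjoin_mono
      rintro z (⟨a, _, rfl⟩ | hz)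
      · exact Or.inl (Set.mem_range_self a)
      · rcases Set.mem_insert_iff.mp hz with h | h
        · exact Or.inr (by rw [h]; rfl)
        · exact Or.inl (by rw [Set.mem_singleton_iff.mp h]; exact Set.mem_range_self x)
  · intro halg
    obtain ⟨p, hp0, hpe⟩ := halg
    have hrep : ∀ u ∈ Algebra.adjoin k (f '' (φ.fixed : Set B) ∪ {(f c)⁻¹}),
        ∃ a ∈ φ.fixed, ∃ t : ℕ, u = f a * ((f c)⁻¹) ^ t := by
      intro u hu
      induction hu using Algebra.adjoin_induction with
      | mem z hz =>
        rcases hz with ⟨a, ha, rfl⟩ | hz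
        · exact ⟨a, ha, 0, by simp⟩
        · obtain rfl : z = (f c)⁻¹ := hz
          refine ⟨c, hcfix, 2, ?_⟩
          field_simp
      | algebraMap r =>
        refine ⟨algebraMap k B r, Subalgebra.algebraMap_mem _ r, 0, ?_⟩
        rw [pow_zero, mul_one]
        exact IsScalarTower.algebraMap_apply k B K r
      | add u v hu hv ihu ihv =>
        obtain ⟨a1, ha1, t1, e1⟩ := ihu
        obtain ⟨a2, ha2, t2, e2⟩ := ihv
        refine ⟨a1 * c ^ t2 + a2 * c ^ t1,
          add_mem (mul_mem ha1 (pow_mem hcfix t2)) (mul_mem ha2 (pow_mem hcfix t1)),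
          t1 + t2, ?_⟩
        rw [e1, e2, map_add, map_mul, map_mul, map_pow, map_pow]
        have key : ∀ s : ℕ, f c ^ s * ((f c)⁻¹) ^ s = 1 := fun s => by
          rw [← mul_pow, mul_inv_cancel₀ hfc, one_pow]
        calc f a1 * (f c)⁻¹ ^ t1 + f a2 * (f c)⁻¹ ^ t2
            = f a1 * (f c ^ t2 * ((f c)⁻¹) ^ t2) * (f c)⁻¹ ^ t1
              + f a2 * (f c ^ t1 * ((f c)⁻¹) ^ t1) * (f c)⁻¹ ^ t2 := by
              rw [key, key]; ring
          _ = (f a1 * f c ^ t2 + f a2 * f c ^ t1) * (f c)⁻¹ ^ (t1 + t2) := by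
              rw [pow_add]; ring
      | mul u v hu hv ihu ihv =>
        obtain ⟨a1, ha1, t1, e1⟩ := ihu
        obtain ⟨a2, ha2, t2, e2⟩ := ihv
        refine ⟨a1 * a2, mul_mem ha1 ha2, t1 + t2, ?_⟩
        rw [e1, e2, map_mul, pow_add]
        ring
    choose g hgfix t hgt using fun i : ℕ => hrep (p.coeff i : K) (p.coeff i).2
    set N := p.natDegree with hN
    set T := (Finset.range (N + 1)).sup t with hT
    have h0 : ∑ i ∈ Finset.range (N + 1), ((p.coeff i : K)) * (f x) ^ i = 0 := by
      rw [Polynomial.aeval_eq_sum_range] at hpe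
      rw [← hpe]
      apply Finset.sum_congr rfl
      intro i _
      rw [Algebra.smul_def, Subalgebra.algebraMap_eq]
      simp
    have h1 : ∑ i ∈ Finset.range (N + 1), (f c) ^ T * (((p.coeff i : K)) * (f x) ^ i) = 0 := by
      rw [← Finset.mul_sum, h0, mul_zero]
    have hsumK : ∑ i ∈ Finset.range (N + 1), f (g i * c ^ (T - t i)) * (f x) ^ i = 0 := by
      rw [← h1]
      apply Finset.sum_congr rfl
      intro i hi
      have hti : t i ≤ T := Finset.le_sup hi
      rw [hgt i, map_mul, map_pow, pow_sub₀ (f c) hfc hti, ← inv_pow]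
      ring
    have hsumB : ∑ i ∈ Finset.range (N + 1), g i * c ^ (T - t i) * x ^ i = 0 := by
      apply hinj
      rw [map_sum, map_zero]
      simpa [map_mul, map_pow] using hsumK
    have hbN : g N * c ^ (T - t N) ≠ 0 := by
      have hcoefN : p.coeff N ≠ 0 := by
        rw [hN, ← Polynomial.leadingCoeff]
        exact leadingCoeff_ne_zero.mpr hp0
      have hKne : (p.coeff N : K) ≠ 0 := fun h => hcoefN (by exact_mod_cast h)
      rw [hgt N] at hKne
      have hgN : g N ≠ 0 := fun h => hKne (by rw [h, map_zero, zero_mul])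
      exact mul_ne_zero hgN (pow_ne_zero _ hcne)
    exact StmtAux.no_poly_rel φ x hpos c hc (fun i => g i * c ^ (T - t i))
      (fun i => mul_mem (hgfix i) (pow_mem hcfix _)) N hbN hsumB
end

section
/- Let B be a domain over a field k with a nontrivial exponential map φ, and let S be a multiplicatively closed subset of B^φ \ {0}. Then φ extends to a nontrivial exponential map S⁻¹φ on the localization S⁻¹B, and (S⁻¹B)^{S⁻¹φ} = S⁻¹(B^φ). -/
open Polynomial

/-! Since `S` consists of invariants, `φ(s) = s` is a unit of `(S⁻¹B)[U]`, so `φ` extends to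
`S⁻¹B` by the universal property of localization; the axioms of an exponential map are
equalities of ring maps out of `S⁻¹B`, hence may be checked on `B`. As `B ↪ S⁻¹B` and
`S⁻¹φ(b / s) = φ(b) / s`, the fraction `b / s` is invariant exactly when `b` is. -/

namespace ExpMap

variable {k B : Type*} [CommRing k] [CommRing B] [Algebra k B] (φ : ExpMap k B)

theorem mem_fixed_iff {b : B} : b ∈ φ.fixed ↔ φ.toAlgHom b = C b := Iff.rfl

theorem mem_fixed_of_mul_mem {x u : B} (hxu : x * u ∈ φ.fixed) (hu : u ∈ φ.fixed)
    (hu_unit : IsUnit u) : x ∈ φ.fixed := by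
  rw [mem_fixed_iff] at *
  have h : φ.toAlgHom x * C u = C x * C u := by rw [← hu, ← map_mul, hxu, C_mul, hu]
  exact (hu_unit.map C).mul_right_cancel h

section Localization

variable {S : Submonoid B} (hS : (S : Set B) ⊆ φ.fixed)
  (A : Type*) [CommRing A] [Algebra B A] [IsLocalization S A]

/-- The extension `S⁻¹φ : S⁻¹B → (S⁻¹B)[U]`, `b / s ↦ φ(b) / s`. -/
noncomputable def localizationRingHom : A →+* A[X] :=
  IsLocalization.lift (M := S) (g := (mapRingHom (algebraMap B A)).comp φ.toAlgHom.toRingHom)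
    fun s => by
      simpa [(φ.mem_fixed_iff).1 (hS s.2)] using (IsLocalization.map_units A s).map C

theorem localizationRingHom_algebraMap (b : B) :
    φ.localizationRingHom hS A (algebraMap B A b) = (φ.toAlgHom b).map (algebraMap B A) :=
  IsLocalization.lift_eq _ b

theorem localizationRingHom_comp_algebraMap :
    (φ.localizationRingHom hS A).comp (algebraMap B A) =
      (mapRingHom (algebraMap B A)).comp φ.toAlgHom.toRingHom :=
  IsLocalization.lift_comp _

theorem eval_zero_localizationRingHom (ξ : A) :
    (φ.localizationRingHom hS A ξ).eval 0 = ξ := by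
  suffices h : (evalRingHom 0).comp (φ.localizationRingHom hS A) = RingHom.id A from
    RingHom.congr_fun h ξ
  refine IsLocalization.ringHom_ext S (RingHom.ext fun b => ?_)
  simp only [RingHom.comp_apply, coe_evalRingHom, localizationRingHom_algebraMap, eval_zero_map,
    φ.eval_zero, RingHom.id_apply]

theorem localizationRingHom_coaction (ξ : A) :
    (φ.localizationRingHom hS A ξ).map (φ.localizationRingHom hS A) =
      (φ.localizationRingHom hS A ξ).eval₂ (C.comp C) (X + C X) := by
  set ψ := φ.localizationRingHom hS A
  suffices h : (mapRingHom ψ).comp ψ = (eval₂RingHom (C.comp C) (X + C X)).comp ψ from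
    RingHom.congr_fun h ξ
  refine IsLocalization.ringHom_ext S (RingHom.ext fun b => ?_)
  simp only [RingHom.comp_apply, coe_mapRingHom, coe_eval₂RingHom, ψ,
    localizationRingHom_algebraMap, Polynomial.map_map, localizationRingHom_comp_algebraMap]
  rw [← Polynomial.map_map, φ.coaction b, eval₂_map, ← coe_mapRingHom, hom_eval₂]
  refine eval₂_congr ?_ ?_ rfl
  · ext c : 1
    simp
  · simp

variable [Algebra k A] [IsScalarTower k B A]

theorem localizationRingHom_commutes (c : k) :
    φ.localizationRingHom hS A (algebraMap k A c) = algebraMap k A[X] c := by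
  rw [IsScalarTower.algebraMap_apply k B A, localizationRingHom_algebraMap, AlgHom.commutes,
    Polynomial.algebraMap_apply, map_C, ← IsScalarTower.algebraMap_apply,
    Polynomial.algebraMap_apply]

noncomputable def localization : ExpMap k A where
  toAlgHom :=
    { φ.localizationRingHom hS A with
      commutes' := φ.localizationRingHom_commutes hS A }
  eval_zero := φ.eval_zero_localizationRingHom hS A
  coaction := φ.localizationRingHom_coaction hS A

theorem localization_toAlgHom_algebraMap (b : B) :
    (φ.localization hS A).toAlgHom (algebraMap B A b) = (φ.toAlgHom b).map (algebraMap B A) :=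
  φ.localizationRingHom_algebraMap hS A b

theorem algebraMap_mem_localization_fixed_iff (hS₀ : S ≤ nonZeroDivisors B) {b : B} :
    algebraMap B A b ∈ (φ.localization hS A).fixed ↔ b ∈ φ.fixed := by
  rw [mem_fixed_iff, mem_fixed_iff, localization_toAlgHom_algebraMap, ← map_C]
  exact (map_injective _ (IsLocalization.injective A hS₀)).eq_iff

theorem mem_localization_fixed_iff (hS₀ : S ≤ nonZeroDivisors B) {ξ : A} :
    ξ ∈ (φ.localization hS A).fixed ↔
      ∃ b ∈ φ.fixed, ∃ s : S, ξ * algebraMap B A s = algebraMap B A b := by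
  have fixed_of_mem : ∀ s ∈ S, algebraMap B A s ∈ (φ.localization hS A).fixed := fun s hs =>
    (φ.algebraMap_mem_localization_fixed_iff hS A hS₀).2 (hS hs)
  constructor
  · intro hξ
    obtain ⟨⟨b, s⟩, rfl⟩ := IsLocalization.mk'_surjective S ξ
    refine ⟨b, ?_, s, IsLocalization.mk'_spec A b s⟩
    rw [← φ.algebraMap_mem_localization_fixed_iff hS A hS₀, ← IsLocalization.mk'_spec A b s]
    exact mul_mem hξ (fixed_of_mem s s.2)
  · rintro ⟨b, hb, s, hξs⟩
    refine mem_fixed_of_mul_mem _ ?_ (fixed_of_mem s s.2) (IsLocalization.map_units A s)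
    rwa [hξs, φ.algebraMap_mem_localization_fixed_iff hS A hS₀]

variable {φ} in
theorem IsNontrivial.localization (hφ : φ.IsNontrivial) (hS₀ : S ≤ nonZeroDivisors B) :
    (φ.localization hS A).IsNontrivial := by
  refine fun htop => hφ (eq_top_iff.2 fun b _ => ?_)
  rw [← φ.algebraMap_mem_localization_fixed_iff hS A hS₀, htop]
  trivial

end Localization

end ExpMap

/-- An exponential map `φ` on a `k`-domain `B` induces, for any multiplicatively closed
`S ⊆ B^φ \ {0}`, a nontrivial exponential map `S⁻¹φ` on `S⁻¹B` extending `φ`, whose ring of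
invariants is `S⁻¹(B^φ)`. -/
theorem stmt5 {k B : Type*} [Field k] [CommRing B] [IsDomain B] [Algebra k B]
    (φ : ExpMap k B) (hφ : φ.IsNontrivial)
    (S : Submonoid B) (hS : (S : Set B) ⊆ (φ.fixed : Set B)) (h0 : (0 : B) ∉ S) :
    ∃ ψ : ExpMap k (Localization S),
      (∀ b : B, ψ.toAlgHom (algebraMap B (Localization S) b) =
        (φ.toAlgHom b).map (algebraMap B (Localization S))) ∧
      ψ.IsNontrivial ∧
      (∀ ξ : Localization S, ξ ∈ ψ.fixed ↔
        ∃ b ∈ φ.fixed, ∃ s : S, ξ * algebraMap B (Localization S) s =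
          algebraMap B (Localization S) b) := by
  have hS₀ : S ≤ nonZeroDivisors B := fun s hs =>
    mem_nonZeroDivisors_of_ne_zero fun h => h0 (h ▸ hs)
  exact ⟨φ.localization hS _, φ.localization_toAlgHom_algebraMap hS _,
    hφ.localization hS _ hS₀, fun _ => φ.mem_localization_fixed_iff hS _ hS₀⟩
end
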